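/- arXiv:0801.4844 — 7 statements merged into one kernel-verified Lean document; each statement's English description precedes it below -/
import Mathlib

section
/- Let α be the automorphism of the free group F_3 on generators a, b, c defined by α(a) = a, α(b) = b·a, α(c) = c·b. Then the word length |α^p(c)| grows quadratically in p: there exist constants C₁, C₂ > 0 such that C₁·p² ≤ |α^p(c)| ≤ C₂·p² for all p ≥ 1. -/
open FreeGroup

private def Lw (p : ℕ) : List (Fin 3 × Bool) :=
  ((2 : Fin 3), true) :: (List.range p).flatMap
    (fun k => ((1 : Fin 3), true) :: List.replicate k ((0 : Fin 3), true))

private lemma reduce_all_true {L : List (Fin 3 × Bool)} (h : ∀ x ∈ L, x.2 = true) :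
    FreeGroup.reduce L = L := by
  induction L with
  | nil => rfl
  | cons a L ih =>
    have hL : ∀ x ∈ L, x.2 = true := fun x hx => h x (List.mem_cons_of_mem _ hx)
    rw [FreeGroup.reduce.cons, ih hL]
    cases L with
    | nil => rfl
    | cons b L' =>
      have ha : a.2 = true := h a List.mem_cons_self
      have hbt : b.2 = true := hL b List.mem_cons_self
      simp [ha, hbt]

private lemma Lw_all_true (p : ℕ) : ∀ x ∈ Lw p, x.2 = true := by
  intro x hx
  simp only [Lw, List.mem_cons, List.mem_flatMap, List.mem_range] at hx
  rcases hx with h | ⟨k, _, h⟩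
  · simp [h]
  · rcases h with h | h
    · simp [h]
    · exact (List.eq_of_mem_replicate h) ▸ rfl

private lemma pow_of_eq (p : ℕ) :
    (FreeGroup.of (0 : Fin 3)) ^ p = FreeGroup.mk (List.replicate p ((0 : Fin 3), true)) := by
  induction p with
  | zero => rfl
  | succ p ih =>
    rw [pow_succ, ih, FreeGroup.of, FreeGroup.mul_mk, ← List.replicate_succ']

private lemma Lw_succ (p : ℕ) :
    Lw (p + 1) = Lw p ++ (((1 : Fin 3), true) :: List.replicate p ((0 : Fin 3), true)) := by
  simp [Lw, List.range_succ]

private lemma Lw_length (p : ℕ) : 2 * (Lw p).length = p ^ 2 + p + 2 := by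
  induction p with
  | zero => rfl
  | succ p ih =>
    rw [Lw_succ, List.length_append] at *
    simp only [List.length_cons, List.length_replicate]
    ring_nf
    ring_nf at ih
    omega

theorem stmt0 (α : MulAut (FreeGroup (Fin 3)))
    (ha : α (of 0) = of 0)
    (hb : α (of 1) = of 1 * of 0)
    (hc : α (of 2) = of 2 * of 1) :
    ∃ C₁ C₂ : ℝ, 0 < C₁ ∧ 0 < C₂ ∧ ∀ p : ℕ, 1 ≤ p →
      C₁ * (p : ℝ) ^ 2 ≤ (((α ^ p) (of 2)).norm : ℝ) ∧
      (((α ^ p) (of 2)).norm : ℝ) ≤ C₂ * (p : ℝ) ^ 2 := by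
  have ha' : ∀ p : ℕ, (α ^ p) (of 0) = of 0 := by
    intro p
    induction p with
    | zero => rfl
    | succ p ih => rw [pow_succ, MulAut.mul_apply, ha, ih]
  have hb' : ∀ p : ℕ, (α ^ p) (of 1) = of 1 * (of 0) ^ p := by
    intro p
    induction p with
    | zero => simp
    | succ p ih =>
      rw [pow_succ, MulAut.mul_apply, hb, _root_.map_mul, ih, ha' p, mul_assoc, ← pow_succ]
  have hc' : ∀ p : ℕ, (α ^ p) (of 2) = FreeGroup.mk (Lw p) := by
    intro p
    induction p with
    | zero => rfl
    | succ p ih =>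
      rw [pow_succ, MulAut.mul_apply, hc, _root_.map_mul, ih, hb' p, pow_of_eq,
        show (of (1 : Fin 3)) = FreeGroup.mk [((1 : Fin 3), true)] from rfl,
        FreeGroup.mul_mk, FreeGroup.mul_mk, Lw_succ]
      simp
  have hnorm : ∀ p : ℕ, 2 * ((α ^ p) (of 2)).norm = p ^ 2 + p + 2 := by
    intro p
    rw [hc' p, FreeGroup.norm, FreeGroup.toWord_mk, reduce_all_true (Lw_all_true p), Lw_length]
  refine ⟨1/2, 2, by norm_num, by norm_num, fun p hp => ?_⟩
  have h := hnorm p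
  have h2 : (2 : ℝ) * ((α ^ p) (of 2)).norm = (p : ℝ) ^ 2 + p + 2 := by
    exact_mod_cast congrArg (Nat.cast : ℕ → ℝ) h
  have hp' : (1 : ℝ) ≤ p := by exact_mod_cast hp
  constructor <;> nlinarith [sq_nonneg ((p : ℝ) - 1)]
end

section
/- Let α_n be the automorphism of the free group F_n on generators a_1, …, a_n defined by α_n(a_1) = a_1 and α_n(a_i) = a_i·a_{i-1} for 2 ≤ i ≤ n. Then for each i, the word length |α_n^p(a_i)| grows like p^{i-1}: there exist constants C₁, C₂ > 0 with C₁·p^{i-1} ≤ |α_n^p(a_i)| ≤ C₂·p^{i-1} for all p ≥ 1. -/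
open FreeGroup

private lemma sum_choose_zero (t : ℕ) :
    (∑ k ∈ Finset.range (t + 1), Nat.choose 0 k) = 1 := by
  induction t with
  | zero => simp
  | succ t ih => rw [Finset.sum_range_succ, ih]; simp

private lemma pascal_sum (p t : ℕ) :
    (∑ k ∈ Finset.range (t + 2), (p + 1).choose k) =
      (∑ k ∈ Finset.range (t + 2), p.choose k) +
        ∑ k ∈ Finset.range (t + 1), p.choose k := by
  rw [Finset.sum_range_succ' _ (t + 1), Finset.sum_range_succ' (fun k => p.choose k) (t + 1)]
  simp only [Nat.choose_succ_succ, Nat.choose_zero_right]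
  rw [Finset.sum_add_distrib]
  simp only [Nat.succ_eq_add_one]
  omega

private lemma psi_mk_le_length {n : ℕ} (L : List (Fin n × Bool)) :
    (Multiplicative.toAdd ((FreeGroup.lift fun _ : Fin n => Multiplicative.ofAdd (1 : ℤ))
      (FreeGroup.mk L))) ≤ (L.length : ℤ) := by
  induction L with
  | nil =>
    have : FreeGroup.mk ([] : List (Fin n × Bool)) = 1 := rfl
    simp [this]
  | cons a L ih =>
    have hsplit : FreeGroup.mk (a :: L) = FreeGroup.mk [a] * FreeGroup.mk L := by
      rw [FreeGroup.mul_mk]; rfl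
    rw [hsplit, _root_.map_mul, toAdd_mul]
    have h1 : (Multiplicative.toAdd
        ((FreeGroup.lift fun _ : Fin n => Multiplicative.ofAdd (1 : ℤ))
          (FreeGroup.mk [a]))) ≤ 1 := by
      rw [FreeGroup.lift_mk]
      rcases a with ⟨b, bb⟩
      cases bb <;> simp
    simp only [List.length_cons]
    push_cast
    omega

private lemma lower_nat (m p : ℕ) (hp : 1 ≤ p) :
    p ^ m ≤ (2 * m) ^ m * m.factorial * ∑ k ∈ Finset.range (m + 1), p.choose k := by
  have hsum1 : 1 ≤ ∑ k ∈ Finset.range (m + 1), p.choose k := by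
    have : p.choose 0 ≤ ∑ k ∈ Finset.range (m + 1), p.choose k :=
      Finset.single_le_sum (f := fun k => p.choose k) (fun _ _ => Nat.zero_le _)
        (Finset.mem_range.2 (Nat.succ_pos m))
    simpa using this
  rcases Nat.eq_zero_or_pos m with rfl | hm
  · simpa using hsum1
  rcases le_or_gt p (2 * m) with h | h
  · calc p ^ m ≤ (2 * m) ^ m := Nat.pow_le_pow_left h m
      _ = (2 * m) ^ m * 1 * 1 := by ring
      _ ≤ (2 * m) ^ m * m.factorial * ∑ k ∈ Finset.range (m + 1), p.choose k := by
          exact Nat.mul_le_mul (Nat.mul_le_mul_left _ m.factorial_pos) hsum1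
  · have h1 : p ^ m ≤ 2 ^ m * (p + 1 - m) ^ m := by
      rw [← Nat.mul_pow]
      exact Nat.pow_le_pow_left (by omega) m
    have h2 : (p + 1 - m) ^ m ≤ p.descFactorial m := Nat.pow_sub_le_descFactorial p m
    have h3 : p.descFactorial m = m.factorial * p.choose m :=
      Nat.descFactorial_eq_factorial_mul_choose p m
    have h4 : p.choose m ≤ ∑ k ∈ Finset.range (m + 1), p.choose k :=
      Finset.single_le_sum (f := fun k => p.choose k) (fun _ _ => Nat.zero_le _)
        (Finset.self_mem_range_succ m)
    have h5 : (2 : ℕ) ^ m ≤ (2 * m) ^ m := Nat.pow_le_pow_left (by omega) m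
    calc p ^ m ≤ 2 ^ m * (p + 1 - m) ^ m := h1
      _ ≤ 2 ^ m * (m.factorial * p.choose m) := by
          exact Nat.mul_le_mul_left _ (h3 ▸ h2)
      _ = 2 ^ m * m.factorial * p.choose m := by ring
      _ ≤ (2 * m) ^ m * m.factorial * ∑ k ∈ Finset.range (m + 1), p.choose k := by
          exact Nat.mul_le_mul (Nat.mul_le_mul_right _ h5) h4

private lemma upper_nat (m p : ℕ) (hp : 1 ≤ p) :
    (∑ k ∈ Finset.range (m + 1), p.choose k) ≤ (m + 1) * p ^ m := by
  calc (∑ k ∈ Finset.range (m + 1), p.choose k)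
      ≤ ∑ _k ∈ Finset.range (m + 1), p ^ m := by
        refine Finset.sum_le_sum fun k hk => ?_
        have hkm : k ≤ m := Nat.lt_succ_iff.1 (Finset.mem_range.1 hk)
        calc p.choose k ≤ p.descFactorial k := by
              rw [Nat.descFactorial_eq_factorial_mul_choose]
              exact Nat.le_mul_of_pos_left _ k.factorial_pos
          _ ≤ p ^ k := Nat.descFactorial_le_pow p k
          _ ≤ p ^ m := Nat.pow_le_pow_right hp hkm
    _ = (m + 1) * p ^ m := by rw [Finset.sum_const, Finset.card_range]; ring

theorem stmt1 (n : ℕ) (hn : 0 < n) (α : MulAut (FreeGroup (Fin n)))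
    (h0 : ∀ i : Fin n, (i : ℕ) = 0 → α (of i) = of i)
    (hs : ∀ i j : Fin n, (j : ℕ) + 1 = (i : ℕ) → α (of i) = of i * of j) :
    ∀ i : Fin n, ∃ C₁ C₂ : ℝ, 0 < C₁ ∧ 0 < C₂ ∧ ∀ p : ℕ, 1 ≤ p →
      C₁ * (p : ℝ) ^ (i : ℕ) ≤ (((α ^ p) (of i)).norm : ℝ) ∧
      (((α ^ p) (of i)).norm : ℝ) ≤ C₂ * (p : ℝ) ^ (i : ℕ) := by
  -- iterates fix generators with index 0
  have hfix : ∀ (p : ℕ) (j : Fin n), (j : ℕ) = 0 → (α ^ p) (of j) = of j := by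
    intro p j hj
    induction p with
    | zero => rfl
    | succ p ih => rw [pow_succ, MulAut.mul_apply, h0 j hj, ih]
  have hstep : ∀ (p : ℕ) (i j : Fin n), (j : ℕ) + 1 = (i : ℕ) →
      (α ^ (p + 1)) (of i) = (α ^ p) (of i) * (α ^ p) (of j) := by
    intro p i j hj
    rw [pow_succ, MulAut.mul_apply, hs i j hj, _root_.map_mul]
  -- the homomorphism counting total exponent
  set ψ : FreeGroup (Fin n) →* Multiplicative ℤ :=
    FreeGroup.lift fun _ : Fin n => Multiplicative.ofAdd (1 : ℤ) with hψ
  have hψle : ∀ w : FreeGroup (Fin n), Multiplicative.toAdd (ψ w) ≤ (w.norm : ℤ) := by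
    intro w
    have := psi_mk_le_length (n := n) w.toWord
    rw [FreeGroup.mk_toWord] at this
    exact this
  -- exact value of ψ on iterates
  have hval : ∀ (p : ℕ) (j : Fin n),
      Multiplicative.toAdd (ψ ((α ^ p) (of j))) =
        ((∑ k ∈ Finset.range ((j : ℕ) + 1), p.choose k : ℕ) : ℤ) := by
    intro p
    induction p with
    | zero =>
      intro j
      simp [hψ, sum_choose_zero]
    | succ p ih =>
      intro j
      by_cases hj0 : (j : ℕ) = 0
      · rw [hfix _ _ hj0, ← hfix p j hj0, ih j]
        simp [hj0]
      · obtain ⟨t, ht⟩ := Nat.exists_eq_succ_of_ne_zero hj0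
        have htn : t < n := lt_trans (by omega) j.isLt
        set j' : Fin n := ⟨t, htn⟩ with hj'
        have hjj : (j' : ℕ) + 1 = (j : ℕ) := by simp [hj', ht]
        rw [hstep p j j' hjj, _root_.map_mul, toAdd_mul, ih j, ih j']
        have := pascal_sum p t
        simp only [hj', ht]
        push_cast
        push_cast at this
        linarith
  -- upper bound on norm
  have hub : ∀ (p : ℕ) (j : Fin n),
      ((α ^ p) (of j)).norm ≤ ∑ k ∈ Finset.range ((j : ℕ) + 1), p.choose k := by
    intro p
    induction p with
    | zero =>
      intro j
      have : ((α ^ 0) (of j)) = of j := rfl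
      rw [this, FreeGroup.norm_of, sum_choose_zero]
    | succ p ih =>
      intro j
      by_cases hj0 : (j : ℕ) = 0
      · rw [hfix _ _ hj0, ← hfix p j hj0]
        exact le_trans (ih j) (Finset.sum_le_sum fun k _ => Nat.choose_le_succ p k)
      · obtain ⟨t, ht⟩ := Nat.exists_eq_succ_of_ne_zero hj0
        have htn : t < n := lt_trans (by omega) j.isLt
        set j' : Fin n := ⟨t, htn⟩ with hj'
        have hjj : (j' : ℕ) + 1 = (j : ℕ) := by simp [hj', ht]
        rw [hstep p j j' hjj]
        calc ((α ^ p) (of j) * (α ^ p) (of j')).norm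
            ≤ ((α ^ p) (of j)).norm + ((α ^ p) (of j')).norm := FreeGroup.norm_mul_le _ _
          _ ≤ (∑ k ∈ Finset.range ((j : ℕ) + 1), p.choose k) +
                ∑ k ∈ Finset.range ((j' : ℕ) + 1), p.choose k := Nat.add_le_add (ih j) (ih j')
          _ = ∑ k ∈ Finset.range ((j : ℕ) + 1), (p + 1).choose k := by
              simp only [hj', ht]
              exact (pascal_sum p t).symm
  -- exact norm
  have hnorm : ∀ (p : ℕ) (j : Fin n),
      ((α ^ p) (of j)).norm = ∑ k ∈ Finset.range ((j : ℕ) + 1), p.choose k := by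
    intro p j
    refine le_antisymm (hub p j) ?_
    have h1 := hψle ((α ^ p) (of j))
    rw [hval p j] at h1
    exact_mod_cast h1
  intro i
  set m := (i : ℕ) with hm
  have hDpos : (0 : ℕ) < (2 * m) ^ m * m.factorial := by
    have h1 : (0 : ℕ) < (2 * m) ^ m := by
      rcases Nat.eq_zero_or_pos m with hm0 | hm1
      · simp [hm0]
      · exact pow_pos (by omega) m
    exact Nat.mul_pos h1 m.factorial_pos
  refine ⟨(((2 * m) ^ m * m.factorial : ℕ) : ℝ)⁻¹, ((m : ℝ) + 1), ?_, by positivity, ?_⟩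
  · have : (0 : ℝ) < (((2 * m) ^ m * m.factorial : ℕ) : ℝ) := by exact_mod_cast hDpos
    positivity
  intro p hp
  rw [hnorm p i]
  have hD : (0 : ℝ) < (((2 * m) ^ m * m.factorial : ℕ) : ℝ) := by exact_mod_cast hDpos
  constructor
  · rw [inv_mul_le_iff₀ hD]
    have := lower_nat m p hp
    calc ((p : ℝ)) ^ m = ((p ^ m : ℕ) : ℝ) := by push_cast; ring
      _ ≤ ((((2 * m) ^ m * m.factorial) * ∑ k ∈ Finset.range (m + 1), p.choose k : ℕ) : ℝ) := by
          exact_mod_cast this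
      _ = (((2 * m) ^ m * m.factorial : ℕ) : ℝ) *
            ((∑ k ∈ Finset.range (m + 1), p.choose k : ℕ) : ℝ) := by push_cast; ring
  · have := upper_nat m p hp
    calc ((∑ k ∈ Finset.range (m + 1), p.choose k : ℕ) : ℝ)
        ≤ (((m + 1) * p ^ m : ℕ) : ℝ) := by exact_mod_cast this
      _ = ((m : ℝ) + 1) * (p : ℝ) ^ m := by push_cast; ring
end

section
/- Let α_n be the automorphism of F_n defined by α_n(a_1) = a_1 and α_n(a_i) = a_i·a_{i-1} for 2 ≤ i ≤ n (with n ≥ 2). Then both a_1 and a_2·a_1·a_2⁻¹ are fixed by α_n, and these two elements generate a free subgroup of rank 2 of the fixed subgroup of α_n. -/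
open FreeGroup SemidirectProduct

private def shiftHom : Multiplicative ℤ →* MulAut (FreeGroup ℤ) where
  toFun k := freeGroupCongr (Equiv.addRight (Multiplicative.toAdd k))
  map_one' := by
    apply MulEquiv.toMonoidHom_injective
    apply FreeGroup.ext_hom; intro k
    simp [freeGroupCongr]
  map_mul' a b := by
    apply MulEquiv.toMonoidHom_injective
    apply FreeGroup.ext_hom; intro k
    simp [freeGroupCongr, add_assoc]
    rw [add_comm (Multiplicative.toAdd a) (Multiplicative.toAdd b)]

theorem stmt2 (n : ℕ) (hn : 2 ≤ n) (α : MulAut (FreeGroup (Fin n)))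
    (h0 : ∀ i : Fin n, (i : ℕ) = 0 → α (of i) = of i)
    (hs : ∀ i j : Fin n, (j : ℕ) + 1 = (i : ℕ) → α (of i) = of i * of j)
    (x y : FreeGroup (Fin n))
    (hx : x = of ⟨0, by omega⟩)
    (hy : y = of ⟨1, by omega⟩ * of ⟨0, by omega⟩ * (of ⟨1, by omega⟩)⁻¹) :
    α x = x ∧ α y = y ∧
    Function.Injective (FreeGroup.lift (fun b : Fin 2 => if b = 0 then x else y)) := by
  have h1 : α (of (⟨0, by omega⟩ : Fin n)) = of ⟨0, by omega⟩ := h0 _ rfl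
  have h2 : α (of (⟨1, by omega⟩ : Fin n)) = of ⟨1, by omega⟩ * of ⟨0, by omega⟩ :=
    hs _ ⟨0, by omega⟩ rfl
  refine ⟨by rw [hx]; exact h1, ?_, ?_⟩
  · rw [hy, _root_.map_mul, _root_.map_mul, _root_.map_inv, h1, h2]
    group
  · set F := FreeGroup.lift (fun b : Fin 2 => if b = 0 then x else y) with hF
    set π : FreeGroup (Fin n) →* FreeGroup ℤ ⋊[shiftHom] Multiplicative ℤ :=
      FreeGroup.lift (fun i : Fin n => if (i : ℕ) = 0 then inl (of (0:ℤ))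
        else if (i : ℕ) = 1 then inr (Multiplicative.ofAdd 1) else 1) with hπ
    have key : π.comp F = inl.comp (FreeGroup.map (fun b : Fin 2 => ((b : ℕ) : ℤ))) := by
      apply FreeGroup.ext_hom
      intro a
      fin_cases a
      · simp [hF, hπ, hx]
      · simp only [MonoidHom.comp_apply, hF, FreeGroup.lift_apply_of, if_neg (by decide : (1:Fin 2) ≠ 0), hy,
          _root_.map_mul, _root_.map_inv, hπ, map.of]
        norm_num
        rw [← MonoidHom.map_inv, ← SemidirectProduct.inl_aut]
        congr 1
    have hli : Function.LeftInverse
        (FreeGroup.map (fun k : ℤ => if k = 1 then (1 : Fin 2) else 0))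
        (FreeGroup.map (fun b : Fin 2 => ((b : ℕ) : ℤ))) := by
      have hcomp : (FreeGroup.map (fun k : ℤ => if k = 1 then (1 : Fin 2) else 0)).comp
          (FreeGroup.map (fun b : Fin 2 => ((b : ℕ) : ℤ))) = MonoidHom.id _ := by
        apply FreeGroup.ext_hom
        intro a
        fin_cases a <;> simp
      intro w
      simpa using DFunLike.congr_fun hcomp w
    have : Function.Injective (π.comp F) := by
      rw [key]
      exact inl_injective.comp hli.injective
    exact Function.Injective.of_comp this
end

section
/- Let G be a group, β an automorphism of G, h ∈ G, and α = i_h ∘ β. If for some q ≥ 1 one has α^q = β^q (as automorphisms of G), then β^q(h) = h, i.e. h lies in the fixed subgroup of β^q. -/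
open FreeGroup in
lemma center_trivial_aux {X : Type*} (x y : X) (hxy : x ≠ y)
    (c : FreeGroup X) (hc : ∀ g : FreeGroup X, c * g = g * c) : c = 1 := by
  classical
  by_contra hne
  have hw : c.toWord ≠ [] := fun h => hne (toWord_eq_nil_iff.mp h)
  obtain ⟨⟨a, b⟩, t, hct⟩ : ∃ p t, c.toWord = p :: t := by
    cases hcw : c.toWord with
    | nil => exact absurd hcw hw
    | cons p t => exact ⟨p, t, rfl⟩
  set z : X := if a = x then y else x with hz_def
  have hz : z ≠ a := by
    by_cases hax : a = x
    · simp [hz_def, hax]; exact fun h => hxy h.symm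
    · simp [hz_def, hax]; exact fun h => hax h.symm
  have hred : reduce c.toWord = c.toWord := reduce_toWord c
  -- left side: (of z * c).toWord = (z, true) :: c.toWord
  have hleft : (of z * c).toWord = (z, true) :: c.toWord := by
    have : of z * c = mk ((z, true) :: c.toWord) := by
      conv_lhs => rw [← mk_toWord (x := c)]
      rw [of, mul_mk]
      rfl
    rw [this, toWord_mk, reduce.cons, hred, hct]
    simp only [← hct]
    have hni : ¬ (z = a ∧ true = !b) := fun ⟨h1, _⟩ => hz h1
    simp [hni]
    exact fun h _ => absurd h hz
  -- right side: compute reduce (c.toWord ++ [(z, true)])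
  have hinvrev_app : invRev (c.toWord ++ [(z, true)]) = (z, false) :: invRev c.toWord := by
    simp [invRev]
  have hredinv : reduce (invRev c.toWord) = invRev c.toWord := by
    rw [reduce_invRev, hred]
  have hright : c * of z = mk (c.toWord ++ [(z, true)]) := by
    conv_lhs => rw [← mk_toWord (x := c)]
    rw [of, mul_mk]
  have heq : (z, true) :: c.toWord = reduce (c.toWord ++ [(z, true)]) := by
    rw [← hleft, ← toWord_mk, ← hright, hc]
  -- analyze reduce (c.toWord ++ [(z,true)]) via invRev
  have key : reduce (c.toWord ++ [(z, true)])
      = invRev (reduce ((z, false) :: invRev c.toWord)) := by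
    rw [← hinvrev_app, reduce_invRev, invRev_invRev]
  cases hiv : invRev c.toWord with
  | nil =>
    have : c.toWord = [] := by
      have := congrArg List.length hiv
      simpa [invRev_length] using this
    exact hw this
  | cons p' t' =>
    obtain ⟨a', b'⟩ := p'
    by_cases hcan : z = a' ∧ false = !b'
    · -- cancellation: lengths differ
      have : reduce ((z, false) :: invRev c.toWord) = t' := by
        rw [reduce.cons, hredinv, hiv]
        simp [hcan.1, hcan.2]
      rw [key, this] at heq
      have hlen := congrArg List.length heq
      have hlt : t'.length + 1 = c.toWord.length := by
        have := congrArg List.length hiv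
        simpa [invRev_length] using this.symm
      simp [invRev_length] at hlen
      omega
    · -- no cancellation: heads differ
      have : reduce ((z, false) :: invRev c.toWord) = (z, false) :: invRev c.toWord := by
        rw [reduce.cons, hredinv, hiv]
        simp only [hiv] at hcan ⊢
        simp [hcan]
        exact fun h1 h2 => absurd ⟨h1, by simp [h2]⟩ hcan
      rw [key, this] at heq
      have : invRev ((z, false) :: invRev c.toWord)
          = c.toWord ++ [(z, true)] := by
        simp [invRev, Function.comp_def]
      rw [this, hct] at heq
      injection heq with h1 _
      exact hz (congrArg Prod.fst h1)

lemma conj_pow_aux {G : Type*} [Group G] (β : MulAut G) (h : G) (k : ℕ) :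
    ∃ n : G, (MulAut.conj h * β) ^ k = MulAut.conj n * β ^ k ∧
      n * (β ^ k) h = h * β n := by
  induction k with
  | zero => exact ⟨1, by simp, by simp⟩
  | succ k ih =>
    obtain ⟨n, h1, h2⟩ := ih
    refine ⟨h * β n, ?_, ?_⟩
    · have hconj : β * MulAut.conj n = MulAut.conj (β n) * β := by
        ext g
        simp [mul_assoc]
      rw [pow_succ', h1, ← mul_assoc, mul_assoc (MulAut.conj h) β (MulAut.conj n), hconj,
        ← mul_assoc, ← map_mul, mul_assoc, ← pow_succ']
    · have : (β ^ (k + 1)) h = β ((β ^ k) h) := by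
        rw [pow_succ']; rfl
      rw [this, mul_assoc, ← map_mul, h2, map_mul, ← mul_assoc]

theorem stmt6 (X : Type*) (x y : X) (hxy : x ≠ y)
    (β : MulAut (FreeGroup X)) (h : FreeGroup X)
    (α : MulAut (FreeGroup X)) (hα : α = MulAut.conj h * β)
    (q : ℕ) (hq : 1 ≤ q) (hpow : α ^ q = β ^ q) :
    (β ^ q) h = h := by
  obtain ⟨n, h1, h2⟩ := conj_pow_aux β h q
  rw [hα, h1] at hpow
  have hconj1 : MulAut.conj n = 1 := by
    have := mul_right_cancel (b := β ^ q) (a := MulAut.conj n) (c := 1)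
    apply this
    rw [hpow, one_mul]
  have hcent : ∀ g : FreeGroup X, n * g = g * n := by
    intro g
    have : MulAut.conj n g = g := by rw [hconj1]; rfl
    simp only [MulAut.conj_apply] at this
    calc n * g = n * g * n⁻¹ * n := by group
    _ = g * n := by rw [this]
  have hn1 : n = 1 := center_trivial_aux x y hxy n hcent
  rw [hn1] at h2
  simpa using h2
end

section
/- Let λ_i, λ_j > 1 be reals and m ∈ ℕ, and define S_p = Σ_{q=1}^{p} λ_i^{p−q} · λ_j^{q} · q^{m}. Then: (1) if λ_j < λ_i, S_p grows like λ_i^p; (2) if λ_j > λ_i, S_p grows like λ_j^p·p^m; (3) if λ_j = λ_i, S_p grows like λ_j^p·p^{m+1}. Here 'grows like b_p' means the ratio S_p/b_p is bounded above and below by positive constants for p ≥ 1. -/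
lemma geomAux (r : ℝ) (h0 : 0 ≤ r) (h1 : r < 1) (n : ℕ) :
    ∑ i ∈ Finset.range n, r ^ i ≤ 1 / (1 - r) := by
  have h : 0 < 1 - r := by linarith
  rw [geom_sum_eq (by intro h; simp [h] at h1 : r ≠ 1)]
  rw [show (r ^ n - 1) / (r - 1) = (1 - r ^ n) / (1 - r) by
    rw [← neg_div_neg_eq]; ring_nf]
  have hrn : 0 ≤ r ^ n := pow_nonneg h0 n
  gcongr
  linarith

lemma iccAux (r : ℝ) (h0 : 0 ≤ r) (h1 : r < 1) (p : ℕ) :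
    ∑ q ∈ Finset.Icc 1 p, r ^ (p - q) ≤ 1 / (1 - r) := by
  rw [show Finset.Icc 1 p = Finset.Ico 1 (p+1) by rfl, Finset.sum_Ico_eq_sum_range]
  simp only [Nat.add_sub_cancel]
  have h : ∀ i, p - (1 + i) = p - 1 - i := fun i => by omega
  calc ∑ i ∈ Finset.range p, r ^ (p - (1+i))
      = ∑ i ∈ Finset.range p, r ^ (p - 1 - i) := by simp [h]
    _ = ∑ i ∈ Finset.range p, r ^ i := Finset.sum_range_reflect _ p
    _ ≤ 1 / (1 - r) := geomAux r h0 h1 p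

theorem stmt8 (lami lamj : ℝ) (hi : 1 < lami) (hj : 1 < lamj) (m : ℕ)
    (S : ℕ → ℝ)
    (hS : ∀ p : ℕ, S p = ∑ q ∈ Finset.Icc 1 p,
      lami ^ (p - q) * lamj ^ q * (q : ℝ) ^ m) :
    (lamj < lami → ∃ C₁ C₂ : ℝ, 0 < C₁ ∧ 0 < C₂ ∧ ∀ p : ℕ, 1 ≤ p →
      C₁ * lami ^ p ≤ S p ∧ S p ≤ C₂ * lami ^ p) ∧
    (lami < lamj → ∃ C₁ C₂ : ℝ, 0 < C₁ ∧ 0 < C₂ ∧ ∀ p : ℕ, 1 ≤ p →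
      C₁ * lamj ^ p * (p : ℝ) ^ m ≤ S p ∧ S p ≤ C₂ * lamj ^ p * (p : ℝ) ^ m) ∧
    (lami = lamj → ∃ C₁ C₂ : ℝ, 0 < C₁ ∧ 0 < C₂ ∧ ∀ p : ℕ, 1 ≤ p →
      C₁ * lamj ^ p * (p : ℝ) ^ (m + 1) ≤ S p ∧ S p ≤ C₂ * lamj ^ p * (p : ℝ) ^ (m + 1)) := by
  have hi0 : (0:ℝ) < lami := by linarith
  have hj0 : (0:ℝ) < lamj := by linarith
  have hnonneg : ∀ p : ℕ, ∀ q ∈ Finset.Icc 1 p,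
      (0:ℝ) ≤ lami ^ (p - q) * lamj ^ q * (q : ℝ) ^ m := by
    intro p q _
    positivity
  refine ⟨?_, ?_, ?_⟩
  · -- Case lamj < lami
    intro hlt
    set r : ℝ := lamj / lami with hrdef
    have hr0 : 0 < r := div_pos hj0 hi0
    have hr1 : r < 1 := (div_lt_one hi0).mpr hlt
    set s : ℝ := (1 + r) / 2 with hsdef
    have hs0 : 0 < s := by rw [hsdef]; linarith
    have hrs : r < s := by rw [hsdef]; linarith
    have hs1 : s < 1 := by rw [hsdef]; linarith
    set t : ℝ := r / s with htdef
    have ht0 : 0 ≤ t := le_of_lt (div_pos hr0 hs0)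
    have ht1 : t < 1 := (div_lt_one hs0).mpr hrs
    have hsum : Summable (fun n : ℕ => (n:ℝ) ^ m * t ^ n) :=
      summable_pow_mul_geometric_of_norm_lt_one m
        (by rwa [Real.norm_eq_abs, abs_of_nonneg ht0])
    obtain ⟨K, hK⟩ := hsum.tendsto_atTop_zero.bddAbove_range
    have hK' : ∀ n : ℕ, (n:ℝ) ^ m * t ^ n ≤ K + 1 := fun n =>
      (hK (Set.mem_range_self n)).trans (by linarith)
    have hK1 : t ≤ K := by
      have := hK (Set.mem_range_self 1)
      simpa using this
    have hKpos : 0 < K + 1 := by linarith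
    have hKnn : 0 ≤ K + 1 := hKpos.le
    have h1s : (0:ℝ) < 1 - s := by linarith
    refine ⟨r, (K + 1) * (1 / (1 - s)), hr0,
      mul_pos hKpos (div_pos one_pos h1s), fun p hp => ?_⟩
    constructor
    · -- lower bound: single term q = 1
      rw [hS p]
      have h1mem : 1 ∈ Finset.Icc 1 p := Finset.mem_Icc.mpr ⟨le_rfl, hp⟩
      have := Finset.single_le_sum (hnonneg p) h1mem
      have heq : lami ^ (p - 1) * lamj ^ 1 * ((1:ℕ):ℝ) ^ m = r * lami ^ p := by
        have : lami ^ (p - 1) * lami ^ 1 = lami ^ p := pow_sub_mul_pow lami hp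
        push_cast
        rw [hrdef]
        field_simp
        rw [one_pow, mul_one]
        nlinarith [this]
      linarith [heq ▸ this]
    · -- upper bound
      rw [hS p]
      have hterm : ∀ q ∈ Finset.Icc 1 p,
          lami ^ (p - q) * lamj ^ q * (q:ℝ) ^ m ≤ lami ^ p * ((K+1) * s ^ q) := by
        intro q hq
        obtain ⟨hq1, hqp⟩ := Finset.mem_Icc.mp hq
        have h1 : lami ^ (p - q) * lamj ^ q = lami ^ p * r ^ q := by
          rw [hrdef, div_pow, ← pow_sub_mul_pow lami hqp]
          field_simp
        have h2 : r ^ q = t ^ q * s ^ q := by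
          rw [htdef, ← mul_pow, div_mul_cancel₀ _ (ne_of_gt hs0)]
        rw [h1, h2]
        have := hK' q
        have hsq : (0:ℝ) ≤ s ^ q := pow_nonneg hs0.le q
        have hip : (0:ℝ) ≤ lami ^ p := pow_nonneg hi0.le p
        calc lami ^ p * (t ^ q * s ^ q) * (q:ℝ) ^ m
            = lami ^ p * (((q:ℝ) ^ m * t ^ q) * s ^ q) := by ring
          _ ≤ lami ^ p * ((K+1) * s ^ q) := by
              apply mul_le_mul_of_nonneg_left ?_ hip
              exact mul_le_mul_of_nonneg_right (hK' q) hsq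
      calc ∑ q ∈ Finset.Icc 1 p, lami ^ (p - q) * lamj ^ q * (q:ℝ) ^ m
          ≤ ∑ q ∈ Finset.Icc 1 p, lami ^ p * ((K+1) * s ^ q) :=
            Finset.sum_le_sum hterm
        _ = ∑ q ∈ Finset.Icc 1 p, lami ^ p * (K+1) * s ^ q := by
            apply Finset.sum_congr rfl; intro q _; ring
        _ = lami ^ p * (K+1) * ∑ q ∈ Finset.Icc 1 p, s ^ q := by
            rw [Finset.mul_sum]
        _ ≤ lami ^ p * (K+1) * ∑ q ∈ Finset.range (p+1), s ^ q := by
            apply mul_le_mul_of_nonneg_left ?_ (mul_nonneg (by positivity) hKnn)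
            apply Finset.sum_le_sum_of_subset_of_nonneg
            · intro x hx
              simp only [Finset.mem_Icc] at hx
              simp [Finset.mem_range]; omega
            · intro x _ _; positivity
        _ ≤ lami ^ p * (K+1) * (1 / (1 - s)) := by
            apply mul_le_mul_of_nonneg_left (geomAux s hs0.le hs1 (p+1))
              (mul_nonneg (by positivity) hKnn)
        _ = (K+1) * (1 / (1 - s)) * lami ^ p := by ring
  · -- Case lami < lamj
    intro hlt
    set r : ℝ := lami / lamj with hrdef
    have hr0 : 0 < r := div_pos hi0 hj0
    have hr1 : r < 1 := (div_lt_one hj0).mpr hlt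
    refine ⟨1, 1 / (1 - r), one_pos, div_pos one_pos (by linarith), fun p hp => ?_⟩
    have hterm : ∀ q ∈ Finset.Icc 1 p,
        lami ^ (p - q) * lamj ^ q = lamj ^ p * r ^ (p - q) := by
      intro q hq
      obtain ⟨hq1, hqp⟩ := Finset.mem_Icc.mp hq
      rw [hrdef, div_pow, ← pow_sub_mul_pow lamj hqp]
      have : lamj ^ (p - q) ≠ 0 := by positivity
      field_simp
    constructor
    · rw [hS p, one_mul]
      have hpmem : p ∈ Finset.Icc 1 p := Finset.mem_Icc.mpr ⟨hp, le_rfl⟩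
      have h := Finset.single_le_sum (hnonneg p) hpmem
      simpa using h
    · rw [hS p]
      calc ∑ q ∈ Finset.Icc 1 p, lami ^ (p - q) * lamj ^ q * (q:ℝ) ^ m
          ≤ ∑ q ∈ Finset.Icc 1 p, lamj ^ p * r ^ (p - q) * (p:ℝ) ^ m := by
            apply Finset.sum_le_sum
            intro q hq
            obtain ⟨hq1, hqp⟩ := Finset.mem_Icc.mp hq
            rw [hterm q hq]
            have hqm : (q:ℝ) ^ m ≤ (p:ℝ) ^ m := by
              apply pow_le_pow_left₀ (by positivity)
              exact_mod_cast hqp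
            apply mul_le_mul_of_nonneg_left hqm (by positivity)
        _ = ∑ q ∈ Finset.Icc 1 p, lamj ^ p * (p:ℝ) ^ m * r ^ (p - q) := by
            apply Finset.sum_congr rfl; intro q _; ring
        _ = lamj ^ p * (p:ℝ) ^ m * ∑ q ∈ Finset.Icc 1 p, r ^ (p - q) := by
            rw [Finset.mul_sum]
        _ ≤ lamj ^ p * (p:ℝ) ^ m * (1 / (1 - r)) := by
            exact mul_le_mul_of_nonneg_left (iccAux r hr0.le hr1 p) (by positivity)
        _ = 1 / (1 - r) * lamj ^ p * (p:ℝ) ^ m := by ring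
  · -- Case lami = lamj
    intro heq
    subst heq
    refine ⟨(1/2) ^ (m+1), 1, by positivity, one_pos, fun p hp => ?_⟩
    have hSp : S p = lami ^ p * ∑ q ∈ Finset.Icc 1 p, (q:ℝ) ^ m := by
      rw [hS p, Finset.mul_sum]
      apply Finset.sum_congr rfl
      intro q hq
      obtain ⟨hq1, hqp⟩ := Finset.mem_Icc.mp hq
      rw [← pow_sub_mul_pow lami hqp]
    have hp0 : (0:ℝ) < p := by exact_mod_cast hp
    constructor
    · -- lower bound
      rw [hSp]
      have hsub : Finset.Icc (p/2 + 1) p ⊆ Finset.Icc 1 p := by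
        intro x hx
        simp only [Finset.mem_Icc] at hx ⊢
        omega
      have hcard : (Finset.Icc (p/2 + 1) p).card = p - p/2 := by
        rw [Nat.card_Icc]; omega
      have hlow : ∑ q ∈ Finset.Icc 1 p, (q:ℝ) ^ m ≥ ((p:ℝ)/2) * ((p:ℝ)/2) ^ m := by
        calc ∑ q ∈ Finset.Icc 1 p, (q:ℝ) ^ m
            ≥ ∑ q ∈ Finset.Icc (p/2 + 1) p, (q:ℝ) ^ m := by
              apply Finset.sum_le_sum_of_subset_of_nonneg hsub
              intro q _ _; positivity
          _ ≥ (Finset.Icc (p/2 + 1) p).card • ((p:ℝ)/2) ^ m := by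
              apply Finset.card_nsmul_le_sum
              intro q hq
              obtain ⟨hq1, hqp⟩ := Finset.mem_Icc.mp hq
              apply pow_le_pow_left₀ (by positivity)
              have : p ≤ 2 * q := by omega
              have : (p:ℝ) ≤ 2 * q := by exact_mod_cast this
              linarith
          _ = ((p - p/2 : ℕ):ℝ) * ((p:ℝ)/2) ^ m := by
              rw [hcard, nsmul_eq_mul]
          _ ≥ ((p:ℝ)/2) * ((p:ℝ)/2) ^ m := by
              apply mul_le_mul_of_nonneg_right ?_ (by positivity)
              have h1 : 2 * (p/2) ≤ p := by omega
              have h2 : (2:ℝ) * ((p/2 : ℕ):ℝ) ≤ (p:ℝ) := by exact_mod_cast h1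
              have h3 : ((p - p/2 : ℕ):ℝ) = (p:ℝ) - ((p/2:ℕ):ℝ) := by
                rw [Nat.cast_sub (Nat.div_le_self p 2)]
              rw [h3]; linarith
      have : ((p:ℝ)/2) * ((p:ℝ)/2) ^ m = (1/2)^(m+1) * (p:ℝ)^(m+1) := by
        have e : (p:ℝ)/2 = (1/2) * p := by ring
        rw [e, mul_pow, pow_succ, pow_succ]
        ring
      calc (1/2:ℝ)^(m+1) * lami ^ p * (p:ℝ)^(m+1)
          = lami ^ p * ((1/2:ℝ)^(m+1) * (p:ℝ)^(m+1)) := by ring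
        _ = lami ^ p * (((p:ℝ)/2) * ((p:ℝ)/2) ^ m) := by rw [this]
        _ ≤ lami ^ p * ∑ q ∈ Finset.Icc 1 p, (q:ℝ) ^ m := by
            apply mul_le_mul_of_nonneg_left hlow (by positivity)
    · rw [hSp, one_mul]
      have hup : ∑ q ∈ Finset.Icc 1 p, (q:ℝ) ^ m ≤ (p:ℝ) ^ (m+1) := by
        calc ∑ q ∈ Finset.Icc 1 p, (q:ℝ) ^ m
            ≤ (Finset.Icc 1 p).card • (p:ℝ) ^ m := by
              apply Finset.sum_le_card_nsmul
              intro q hq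
              obtain ⟨hq1, hqp⟩ := Finset.mem_Icc.mp hq
              apply pow_le_pow_left₀ (by positivity)
              exact_mod_cast hqp
          _ = (p:ℝ) * (p:ℝ) ^ m := by
              rw [Nat.card_Icc, nsmul_eq_mul]
              norm_num
          _ = (p:ℝ) ^ (m+1) := by rw [pow_succ]; ring
      exact mul_le_mul_of_nonneg_left hup (by positivity)
end

section
/- Let ℓ ≥ 1 and let M be the (ℓ+2)×(ℓ+2) upper-triangular integer matrix with all diagonal entries equal to 1, entry M(1,2) = 1, entries M(1,j) = 2 for 3 ≤ j ≤ ℓ+2, entries M(i, i+1) = 2 for 2 ≤ i ≤ ℓ+1, and all other entries 0. Let v be the last standard basis vector. Then the ℓ¹-norm of M^p·v grows like p^{ℓ+1}: there are constants C₁, C₂ > 0 with C₁·p^{ℓ+1} ≤ ‖M^p v‖₁ ≤ C₂·p^{ℓ+1} for all p ≥ 1. -/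
/-- The transition matrix for the automorphism `β_ℓ` of `F_{ℓ+2}`:
upper triangular, diagonal `1`, `M (0,1) = 1`, `M (0,j) = 2` for `j ≥ 2`,
`M (i,i+1) = 2` for `i ≥ 1`, all other entries `0`. -/
def transMat (ℓ : ℕ) : Matrix (Fin (ℓ + 2)) (Fin (ℓ + 2)) ℤ := fun i j =>
  if (i : ℕ) + 1 = (j : ℕ) then (if (i : ℕ) = 0 then 1 else 2)
  else if i = j then 1
  else if (i : ℕ) = 0 ∧ 2 ≤ (j : ℕ) then 2
  else 0

namespace Stmt15Aux

def Nmat (ℓ : ℕ) : Matrix (Fin (ℓ + 2)) (Fin (ℓ + 2)) ℤ := fun i j =>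
  if (i : ℕ) + 1 = (j : ℕ) then (if (i : ℕ) = 0 then 1 else 2)
  else if (i : ℕ) = 0 ∧ 2 ≤ (j : ℕ) then 2
  else 0

lemma transMat_eq (ℓ : ℕ) : transMat ℓ = 1 + Nmat ℓ := by
  ext i j
  simp only [transMat, Nmat, Matrix.add_apply, Matrix.one_apply]
  rcases eq_or_ne i j with h | h
  · subst h
    have h1 : ¬ ((i:ℕ) + 1 = (i:ℕ)) := by omega
    have h2 : ¬ ((i:ℕ) = 0 ∧ 2 ≤ (i:ℕ)) := by omega
    simp [h1, h2]
    intro h0; simp [h0]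
  · simp only [if_neg h]
    split_ifs <;> ring

lemma Nmat_nonneg (ℓ : ℕ) (i j : Fin (ℓ+2)) : 0 ≤ Nmat ℓ i j := by
  unfold Nmat; split_ifs <;> norm_num

lemma transMat_nonneg (ℓ : ℕ) (i j : Fin (ℓ+2)) : 0 ≤ transMat ℓ i j := by
  unfold transMat; split_ifs <;> norm_num

lemma pow_entry_nonneg {n : ℕ} (A : Matrix (Fin n) (Fin n) ℤ) (hA : ∀ i j, 0 ≤ A i j) :
    ∀ (k : ℕ) (i j : Fin n), 0 ≤ (A ^ k) i j := by
  intro k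
  induction k with
  | zero =>
    intro i j
    rw [pow_zero]
    rcases eq_or_ne i j with h | h
    · subst h; simp [Matrix.one_apply_eq]
    · simp [Matrix.one_apply_ne h]
  | succ k ih =>
    intro i j
    rw [pow_succ, Matrix.mul_apply]
    exact Finset.sum_nonneg fun m _ => mul_nonneg (ih i m) (hA m j)

lemma Nmat_lt (ℓ : ℕ) {i j : Fin (ℓ+2)} (h : Nmat ℓ i j ≠ 0) : (i:ℕ) < (j:ℕ) := by
  unfold Nmat at h; split_ifs at h <;> omega

lemma Nmat_pow_eq_zero (ℓ : ℕ) : ∀ (k : ℕ) (i j : Fin (ℓ+2)), (j:ℕ) < (i:ℕ) + k →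
    ((Nmat ℓ) ^ k) i j = 0 := by
  intro k
  induction k with
  | zero =>
    intro i j h
    rw [pow_zero]
    exact Matrix.one_apply_ne (fun hh => by subst hh; omega)
  | succ k ih =>
    intro i j h
    rw [pow_succ', Matrix.mul_apply]
    apply Finset.sum_eq_zero
    intro m _
    rcases eq_or_ne (Nmat ℓ i m) 0 with h0 | h0
    · rw [h0, zero_mul]
    · have := Nmat_lt ℓ h0
      rw [ih m j (by omega), mul_zero]

lemma one_le_Nmat_pow (ℓ : ℕ) : ∀ (k : ℕ) (i : Fin (ℓ+2)) (h : (i:ℕ) + k < ℓ + 2),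
    1 ≤ ((Nmat ℓ) ^ k) i ⟨(i:ℕ) + k, h⟩ := by
  intro k
  induction k with
  | zero =>
    intro i h
    have : (⟨(i:ℕ) + 0, h⟩ : Fin (ℓ+2)) = i := Fin.ext (by simp)
    rw [pow_zero, this, Matrix.one_apply_eq]
  | succ k ih =>
    intro i h
    rw [pow_succ', Matrix.mul_apply]
    have hm : (i:ℕ) + 1 < ℓ + 2 := by omega
    set m : Fin (ℓ+2) := ⟨(i:ℕ) + 1, hm⟩ with hmdef
    have h1 : 1 ≤ Nmat ℓ i m := by
      unfold Nmat
      rw [if_pos (show (i:ℕ) + 1 = (m:ℕ) from rfl)]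
      split_ifs <;> norm_num
    have h' : (m:ℕ) + k < ℓ + 2 := by simp only [hmdef]; omega
    have h2 := ih m h'
    have heq : (⟨(m:ℕ) + k, h'⟩ : Fin (ℓ+2)) = ⟨(i:ℕ) + (k+1), h⟩ := Fin.ext (by simp [hmdef]; omega)
    rw [heq] at h2
    calc (1:ℤ) = 1 * 1 := by ring
    _ ≤ Nmat ℓ i m * ((Nmat ℓ)^k) m ⟨(i:ℕ) + (k+1), h⟩ :=
        mul_le_mul h1 h2 one_pos.le (le_trans zero_le_one h1)
    _ ≤ ∑ x, Nmat ℓ i x * ((Nmat ℓ)^k) x ⟨(i:ℕ) + (k+1), h⟩ :=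
        Finset.single_le_sum
          (fun x _ => mul_nonneg (Nmat_nonneg ℓ i x) (pow_entry_nonneg _ (Nmat_nonneg ℓ) k x _))
          (Finset.mem_univ m)

lemma pow_apply (ℓ p : ℕ) (i j : Fin (ℓ+2)) :
    ((transMat ℓ) ^ p) i j = ∑ k ∈ Finset.range (p+1),
      (p.choose k : ℤ) * ((Nmat ℓ) ^ k) i j := by
  rw [transMat_eq, add_comm (1 : Matrix (Fin (ℓ+2)) (Fin (ℓ+2)) ℤ)]
  rw [Commute.add_pow (Commute.one_right (Nmat ℓ))]
  rw [Matrix.sum_apply]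
  refine Finset.sum_congr rfl fun k hk => ?_
  rw [one_pow, mul_one, ((Nat.cast_commute (p.choose k) ((Nmat ℓ)^k)).eq).symm]
  rw [← Matrix.diagonal_natCast (n := Fin (ℓ+2)) (α := ℤ) (p.choose k), Matrix.diagonal_mul]

/-- column sums of powers of `Nmat` at the last column -/
def gcol (ℓ k : ℕ) : ℤ := ∑ i, ((Nmat ℓ) ^ k) i (Fin.last (ℓ+1))

lemma gcol_nonneg (ℓ k : ℕ) : 0 ≤ gcol ℓ k :=
  Finset.sum_nonneg fun i _ => pow_entry_nonneg _ (Nmat_nonneg ℓ) k i _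

lemma gcol_zero (ℓ : ℕ) : gcol ℓ 0 = 1 := by
  unfold gcol
  simp [Matrix.one_apply]

lemma one_le_gcol (ℓ : ℕ) : 1 ≤ gcol ℓ (ℓ+1) := by
  have hlt : ((0 : Fin (ℓ+2)) : ℕ) + (ℓ+1) < ℓ + 2 := by simp
  have h1 := one_le_Nmat_pow ℓ (ℓ+1) 0 hlt
  have heq : (⟨((0 : Fin (ℓ+2)) : ℕ) + (ℓ+1), hlt⟩ : Fin (ℓ+2)) = Fin.last (ℓ+1) := by
    apply Fin.ext; simp
  rw [heq] at h1
  exact le_trans h1 (Finset.single_le_sum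
    (fun i _ => pow_entry_nonneg _ (Nmat_nonneg ℓ) (ℓ+1) i _) (Finset.mem_univ 0))

lemma S_eq (ℓ p : ℕ) :
    ∑ i, ((transMat ℓ) ^ p) i (Fin.last (ℓ+1)) =
      ∑ k ∈ Finset.range (ℓ+2), (p.choose k : ℤ) * gcol ℓ k := by
  simp only [pow_apply, gcol, Finset.mul_sum]
  rw [Finset.sum_comm]
  set F : ℕ → ℤ := fun k => ∑ i, (p.choose k : ℤ) * ((Nmat ℓ) ^ k) i (Fin.last (ℓ+1)) with hF
  have h1 : ∑ k ∈ Finset.range (p+1), F k = ∑ k ∈ Finset.range (max (p+1) (ℓ+2)), F k := by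
    apply Finset.sum_subset (Finset.range_subset_range.2 (le_max_left _ _))
    intro k _ hk
    have hk' : p < k := by simp only [Finset.mem_range, not_lt] at hk; omega
    simp only [hF, Nat.choose_eq_zero_of_lt hk', Nat.cast_zero, zero_mul,
      Finset.sum_const_zero]
  have h2 : ∑ k ∈ Finset.range (ℓ+2), F k = ∑ k ∈ Finset.range (max (p+1) (ℓ+2)), F k := by
    apply Finset.sum_subset (Finset.range_subset_range.2 (le_max_right _ _))
    intro k _ hk
    have hk' : ℓ + 2 ≤ k := by simp only [Finset.mem_range, not_lt] at hk; omega
    simp only [hF]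
    apply Finset.sum_eq_zero
    intro i _
    rw [Nmat_pow_eq_zero ℓ k i (Fin.last (ℓ+1)) (by simp [Fin.last]; omega), mul_zero]
  rw [h1, h2]

lemma lower (ℓ p : ℕ) (hℓ : 1 ≤ ℓ) :
    1 + (p.choose (ℓ+1) : ℤ) ≤ ∑ i, ((transMat ℓ) ^ p) i (Fin.last (ℓ+1)) := by
  rw [S_eq]
  have key : 1 + (p.choose (ℓ+1) : ℤ) ≤
      ∑ k ∈ ({0, ℓ+1} : Finset ℕ), (p.choose k : ℤ) * gcol ℓ k := by
    rw [Finset.sum_pair (by omega : (0:ℕ) ≠ ℓ+1)]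
    have a1 : (1:ℤ) ≤ (p.choose 0 : ℤ) * gcol ℓ 0 := by simp [gcol_zero]
    have a2 : (p.choose (ℓ+1) : ℤ) ≤ (p.choose (ℓ+1) : ℤ) * gcol ℓ (ℓ+1) :=
      le_mul_of_one_le_right (by positivity) (one_le_gcol ℓ)
    linarith
  refine le_trans key (Finset.sum_le_sum_of_subset_of_nonneg ?_ ?_)
  · intro x hx
    simp only [Finset.mem_insert, Finset.mem_singleton] at hx
    simp only [Finset.mem_range]; omega
  · intro k _ _
    exact mul_nonneg (by positivity) (gcol_nonneg ℓ k)

lemma upper (ℓ p : ℕ) (hp : 1 ≤ p) :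
    ∑ i, ((transMat ℓ) ^ p) i (Fin.last (ℓ+1)) ≤
      (∑ k ∈ Finset.range (ℓ+2), gcol ℓ k) * (p:ℤ)^(ℓ+1) := by
  rw [S_eq, Finset.sum_mul]
  apply Finset.sum_le_sum
  intro k hk
  have hk' : k ≤ ℓ + 1 := by simp only [Finset.mem_range] at hk; omega
  have hc : (p.choose k : ℤ) ≤ (p:ℤ)^(ℓ+1) := by
    calc (p.choose k : ℤ) ≤ ((p^k : ℕ) : ℤ) := by exact_mod_cast Nat.choose_le_pow p k
    _ = (p:ℤ)^k := by push_cast; ring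
    _ ≤ (p:ℤ)^(ℓ+1) := pow_le_pow_right₀ (by exact_mod_cast hp) hk'
  calc (p.choose k : ℤ) * gcol ℓ k ≤ (p:ℤ)^(ℓ+1) * gcol ℓ k :=
        mul_le_mul_of_nonneg_right hc (gcol_nonneg ℓ k)
  _ = gcol ℓ k * (p:ℤ)^(ℓ+1) := by ring

lemma nat_key (ℓ p : ℕ) :
    p ^ (ℓ+1) ≤ (2*(ℓ+1)) ^ (ℓ+1) * ((Nat.factorial (ℓ+1)) * (1 + p.choose (ℓ+1))) := by
  rcases le_or_gt p (2*(ℓ+1)) with h | h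
  · calc p ^ (ℓ+1) ≤ (2*(ℓ+1)) ^ (ℓ+1) := Nat.pow_le_pow_left h _
    _ ≤ _ := Nat.le_mul_of_pos_right _ (by positivity)
  · have h1 : (p + 1 - (ℓ+1)) ^ (ℓ+1) ≤ p.descFactorial (ℓ+1) :=
      Nat.pow_sub_le_descFactorial p (ℓ+1)
    have h2 : p + 1 - (ℓ+1) = p - ℓ := by omega
    rw [h2] at h1
    have h3 : p ≤ 2 * (p - ℓ) := by omega
    calc p ^ (ℓ+1) ≤ (2 * (p - ℓ)) ^ (ℓ+1) := Nat.pow_le_pow_left h3 _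
    _ = 2 ^ (ℓ+1) * (p - ℓ) ^ (ℓ+1) := by rw [mul_pow]
    _ ≤ 2 ^ (ℓ+1) * p.descFactorial (ℓ+1) := Nat.mul_le_mul_left _ h1
    _ = 2 ^ (ℓ+1) * ((Nat.factorial (ℓ+1)) * p.choose (ℓ+1)) := by
        rw [Nat.descFactorial_eq_factorial_mul_choose]
    _ ≤ (2*(ℓ+1)) ^ (ℓ+1) * ((Nat.factorial (ℓ+1)) * (1 + p.choose (ℓ+1))) := by
        apply Nat.mul_le_mul (Nat.pow_le_pow_left (by omega) _)
        exact Nat.mul_le_mul_left _ (by omega)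

end Stmt15Aux

open Stmt15Aux in
theorem stmt15 (ℓ : ℕ) (hℓ : 1 ≤ ℓ) :
    ∃ C₁ C₂ : ℝ, 0 < C₁ ∧ 0 < C₂ ∧ ∀ p : ℕ, 1 ≤ p →
      C₁ * (p : ℝ) ^ (ℓ + 1) ≤
        ((∑ i, |(((transMat ℓ) ^ p).mulVec (Pi.single (Fin.last (ℓ + 1)) 1)) i| : ℤ) : ℝ) ∧
      ((∑ i, |(((transMat ℓ) ^ p).mulVec (Pi.single (Fin.last (ℓ + 1)) 1)) i| : ℤ) : ℝ) ≤
        C₂ * (p : ℝ) ^ (ℓ + 1) := by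
  set A : ℝ := ((2*(ℓ+1) : ℕ) : ℝ) ^ (ℓ+1) * (((Nat.factorial (ℓ+1)) : ℕ) : ℝ) with hA
  have hApos : 0 < A := by positivity
  set G : ℤ := ∑ k ∈ Finset.range (ℓ+2), gcol ℓ k with hG
  have hG1 : 1 ≤ G := by
    rw [hG]
    calc (1:ℤ) = gcol ℓ 0 := (gcol_zero ℓ).symm
    _ ≤ _ := Finset.single_le_sum (fun k _ => gcol_nonneg ℓ k)
          (Finset.mem_range.2 (by omega))
  refine ⟨A⁻¹, (G:ℝ), inv_pos.2 hApos, by exact_mod_cast zero_lt_one.trans_le hG1, ?_⟩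
  intro p hp
  have hSabs : (∑ i, |(((transMat ℓ) ^ p).mulVec (Pi.single (Fin.last (ℓ + 1)) 1)) i| : ℤ)
      = ∑ i, ((transMat ℓ) ^ p) i (Fin.last (ℓ+1)) := by
    rw [Matrix.mulVec_single]
    refine Finset.sum_congr rfl fun i _ => ?_
    simp only [Pi.smul_apply, Matrix.col_apply, MulOpposite.smul_eq_mul_unop, MulOpposite.unop_op]
    rw [mul_one]
    exact abs_of_nonneg (pow_entry_nonneg _ (transMat_nonneg ℓ) p i _)
  rw [hSabs]
  constructor
  · have hcast : ((p:ℝ)) ^ (ℓ+1) ≤ A * (1 + (p.choose (ℓ+1) : ℝ)) := by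
      have := nat_key ℓ p
      have := (Nat.cast_le (α := ℝ)).2 this
      push_cast at this ⊢
      rw [hA]; push_cast
      nlinarith [this]
    have hlow : (1 + (p.choose (ℓ+1) : ℝ)) ≤
        ((∑ i, ((transMat ℓ) ^ p) i (Fin.last (ℓ+1)) : ℤ) : ℝ) := by
      have := lower ℓ p hℓ
      exact_mod_cast this
    rw [inv_mul_le_iff₀ hApos]
    calc ((p:ℝ)) ^ (ℓ+1) ≤ A * (1 + (p.choose (ℓ+1) : ℝ)) := hcast
    _ ≤ A * _ := by
        apply mul_le_mul_of_nonneg_left hlow hApos.le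
  · have h2 : (∑ i, ((transMat ℓ) ^ p) i (Fin.last (ℓ+1))) ≤ G * (p:ℤ)^(ℓ+1) := by
      rw [hG]; exact upper ℓ p hp
    calc ((∑ i, ((transMat ℓ) ^ p) i (Fin.last (ℓ+1)) : ℤ) : ℝ)
        ≤ ((G * (p:ℤ)^(ℓ+1) : ℤ) : ℝ) := by exact_mod_cast h2
    _ = (G:ℝ) * (p:ℝ)^(ℓ+1) := by push_cast; ring
end

section
/- Let β_ℓ be the automorphism of the free group F_{ℓ+2} = ⟨a, a₀, a₁, …, a_ℓ⟩ defined by β_ℓ(a) = a, β_ℓ(a₀) = a₀·a, and β_ℓ(a_i) = (a_{i−1}·a)·a_i·(a_{i−1}·a)⁻¹ for 1 ≤ i ≤ ℓ. Then for every p ≥ 1 and every i with 1 ≤ i ≤ ℓ, the word β_ℓ^p(a_i) (computed by substitution) is already reduced, i.e. no cancellation occurs when iterating β_ℓ on the generators a_i. -/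
/-- The image of the generator with index `k` of `F_{ℓ+2}` under the automorphism
`β_ℓ`, as an (unreduced) word. Index `0` is `a`, index `1` is `a₀`, and index
`j + 1` is `a_j` for `1 ≤ j ≤ ℓ`.  So `a ↦ a`, `a₀ ↦ a₀ a`, and
`a_j ↦ (a_{j-1} a) a_j (a_{j-1} a)⁻¹`. -/
def betaWord (ℓ : ℕ) (k : Fin (ℓ + 2)) : List (Fin (ℓ + 2) × Bool) :=
  if (k : ℕ) = 0 then [(k, true)]
  else if (k : ℕ) = 1 then [(k, true), (0, true)]
  else if h : 1 ≤ (k : ℕ) then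
    [(⟨(k : ℕ) - 1, by omega⟩, true), (0, true), (k, true),
     (0, false), (⟨(k : ℕ) - 1, by omega⟩, false)]
  else [(k, true)]

/-- Formal substitution (without free reduction) of `betaWord` into a word:
a positive letter `k` is replaced by `betaWord ℓ k`, a negative letter by the
formal inverse of `betaWord ℓ k`. -/
def betaSubst (ℓ : ℕ) (L : List (Fin (ℓ + 2) × Bool)) : List (Fin (ℓ + 2) × Bool) :=
  L.flatMap fun s =>
    if s.2 then betaWord ℓ s.1
    else ((betaWord ℓ s.1).reverse).map fun t => (t.1, !t.2)

namespace Stmt19Aux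

/-- The set of allowed adjacent pairs of letters, closed under the substitution
and containing no cancelling pair. -/
def good (ℓ : ℕ) (u v : Fin (ℓ + 2) × Bool) : Prop :=
  if u.1.val = 0 then
    if v.1.val = 0 then u.2 = v.2
    else if u.2 = true then (v.2 = true ∨ 2 ≤ v.1.val) else True
  else
    v.1.val = 0 ∧ (v.2 = true ∨ (u.2 = true → 2 ≤ u.1.val))

lemma good_noCancel {ℓ : ℕ} {u v : Fin (ℓ + 2) × Bool} (h : good ℓ u v) :
    ¬(u.1 = v.1 ∧ u.2 = !v.2) := by
  rintro ⟨h1, h2⟩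
  unfold good at h
  split_ifs at h with h0 hv hu
  · rw [h] at h2; simp at h2
  · exact hv (h1 ▸ h0)
  · exact hv (h1 ▸ h0)
  · exact h0 (h1.symm ▸ h.1)

lemma reduce_eq_self {α : Type*} [DecidableEq α] :
    ∀ {L : List (α × Bool)},
      List.Chain' (fun u v => ¬(u.1 = v.1 ∧ u.2 = !v.2)) L → FreeGroup.reduce L = L := by
  intro L
  induction L with
  | nil => intro _; rfl
  | cons x L ih =>
    intro h
    rw [FreeGroup.reduce.cons, ih h.tail]
    cases L with
    | nil => rfl
    | cons y t =>
      have hxy : ¬(x.1 = y.1 ∧ x.2 = !y.2) := (List.isChain_cons_cons.mp h).1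
      simp only [if_neg hxy]

/-- The image of a single letter under the substitution. -/
def img (ℓ : ℕ) (s : Fin (ℓ + 2) × Bool) : List (Fin (ℓ + 2) × Bool) :=
  if s.2 then betaWord ℓ s.1
  else ((betaWord ℓ s.1).reverse).map fun t => (t.1, !t.2)

lemma betaSubst_eq (ℓ : ℕ) (L : List (Fin (ℓ + 2) × Bool)) :
    betaSubst ℓ L = (L.map (img ℓ)).flatten := by
  rw [← List.flatMap_def]; rfl

/-- The first letter of the image of a letter. -/
def hdL (ℓ : ℕ) (s : Fin (ℓ + 2) × Bool) : Fin (ℓ + 2) × Bool :=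
  if s.1.val = 0 then s
  else if s.1.val = 1 then (if s.2 then s else ((0 : Fin (ℓ + 2)), false))
  else (⟨s.1.val - 1, by omega⟩, true)

/-- The last letter of the image of a letter. -/
def lstL (ℓ : ℕ) (s : Fin (ℓ + 2) × Bool) : Fin (ℓ + 2) × Bool :=
  if s.1.val = 0 then s
  else if s.1.val = 1 then (if s.2 then ((0 : Fin (ℓ + 2)), true) else s)
  else (⟨s.1.val - 1, by omega⟩, false)

lemma img_ne_nil (ℓ : ℕ) (s : Fin (ℓ + 2) × Bool) : img ℓ s ≠ [] := by
  rcases s with ⟨k, b⟩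
  by_cases h0 : (k : ℕ) = 0
  · cases b <;> simp [img, betaWord, h0]
  · by_cases h1 : (k : ℕ) = 1
    · cases b <;> simp [img, betaWord, h0, h1]
    · have hk : 1 ≤ (k : ℕ) := by omega
      cases b <;> simp [img, betaWord, h0, h1, hk]

lemma head?_img (ℓ : ℕ) (s : Fin (ℓ + 2) × Bool) :
    (img ℓ s).head? = some (hdL ℓ s) := by
  rcases s with ⟨k, b⟩
  by_cases h0 : (k : ℕ) = 0
  · cases b <;> simp [img, betaWord, hdL, h0]
  · by_cases h1 : (k : ℕ) = 1
    · cases b <;> simp [img, betaWord, hdL, h0, h1]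
    · have hk : 1 ≤ (k : ℕ) := by omega
      cases b <;> simp [img, betaWord, hdL, h0, h1, hk]

lemma getLast?_img (ℓ : ℕ) (s : Fin (ℓ + 2) × Bool) :
    (img ℓ s).getLast? = some (lstL ℓ s) := by
  rcases s with ⟨k, b⟩
  by_cases h0 : (k : ℕ) = 0
  · cases b <;> simp [img, betaWord, lstL, h0]
  · by_cases h1 : (k : ℕ) = 1
    · cases b <;> simp [img, betaWord, lstL, h0, h1]
    · have hk : 1 ≤ (k : ℕ) := by omega
      cases b <;> simp [img, betaWord, lstL, h0, h1, hk]

lemma chain'_img (ℓ : ℕ) (s : Fin (ℓ + 2) × Bool) :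
    List.Chain' (good ℓ) (img ℓ s) := by
  rcases s with ⟨k, b⟩
  by_cases h0 : (k : ℕ) = 0
  · cases b <;> simp [List.Chain', img, betaWord, good, h0]
  · by_cases h1 : (k : ℕ) = 1
    · cases b <;> simp [List.Chain', img, betaWord, good, h0, h1]
    · have hk : 1 ≤ (k : ℕ) := by omega
      cases b <;> simp [List.Chain', img, betaWord, good, h0, h1, hk] <;> omega

lemma good_lst_hd {ℓ : ℕ} {u v : Fin (ℓ + 2) × Bool} (h : good ℓ u v) :
    good ℓ (lstL ℓ u) (hdL ℓ v) := by
  rcases u with ⟨x, bx⟩; rcases v with ⟨y, by'⟩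
  by_cases hx0 : (x : ℕ) = 0 <;> by_cases hx1 : (x : ℕ) = 1 <;>
  by_cases hy0 : (y : ℕ) = 0 <;> by_cases hy1 : (y : ℕ) = 1 <;>
  cases bx <;> cases by' <;>
  simp_all [good, lstL, hdL, -Fin.val_eq_zero_iff] <;> omega

lemma chain'_betaSubst {ℓ : ℕ} {W : List (Fin (ℓ + 2) × Bool)}
    (h : List.Chain' (good ℓ) W) : List.Chain' (good ℓ) (betaSubst ℓ W) := by
  rw [betaSubst_eq]
  have hnil : [] ∉ W.map (img ℓ) := by
    intro hmem
    rcases List.mem_map.mp hmem with ⟨s, _, hs⟩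
    exact img_ne_nil ℓ s hs
  rw [List.Chain', List.isChain_flatten hnil]
  constructor
  · intro l hl
    rcases List.mem_map.mp hl with ⟨s, _, rfl⟩
    exact chain'_img ℓ s
  · rw [List.isChain_map]
    refine h.imp ?_
    intro s t hst x hx y hy
    rw [getLast?_img] at hx
    rw [head?_img] at hy
    obtain rfl : lstL ℓ s = x := by simpa using hx
    obtain rfl : hdL ℓ t = y := by simpa using hy
    exact good_lst_hd hst

end Stmt19Aux

theorem stmt19 (ℓ : ℕ) (hℓ : 1 ≤ ℓ) (k : Fin (ℓ + 2)) (hk : 2 ≤ (k : ℕ))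
    (p : ℕ) (hp : 1 ≤ p) :
    FreeGroup.reduce ((betaSubst ℓ)^[p] [(k, true)]) = (betaSubst ℓ)^[p] [(k, true)] := by
  have key : ∀ q : ℕ, List.Chain' (Stmt19Aux.good ℓ) ((betaSubst ℓ)^[q] [(k, true)]) := by
    intro q
    induction q with
    | zero => simp [List.Chain']
    | succ q ih =>
      rw [Function.iterate_succ_apply']
      exact Stmt19Aux.chain'_betaSubst ih
  exact Stmt19Aux.reduce_eq_self ((key p).imp fun _ _ h => Stmt19Aux.good_noCancel h)
end
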